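/- In the robust pro-rata setting, a policy ([p̂],[û],[Θ],[Γ]) satisfies the robust constraints — namely, for every disturbance sequence [d]∈𝒟 and every t∈{0,…,T−1}: p(t)≥0, u(t)≥0, Σ_{k=0}^{t} α^{t−k} p(k) ≤ α^t p̄, w(t+1)≥0, and B(t)≤F(t), where p(t)=p̂(t)+Θ(t)d(t), u(t)=û(t)+Γ(t)d(t), w(t+1)=Σ_{k=0}^{t}(ê(k)+d(k)+u(k)+Aᵀp(k)−p(k)), B(t)=Σ_{τ=0}^{t} 1ᵀu(τ) — if and only if it satisfies the explicit deterministic linear constraints: for every t∈{0,…,T−1}: p̂(t)−|Θ(t)|r(t) ≥ 0; û(t)−|Γ(t)|r(t) ≥ 0; Σ_{k=0}^{t} α^{t−k}( p̂(k)+|Θ(k)|r(k) ) ≤ α^t p̄; ŵ(t+1) − Σ_{k=0}^{t} |I+Γ(k)+(Aᵀ−I)Θ(k)| r(k) ≥ 0, where ŵ(t+1)=Σ_{k=0}^{t}(ê(k)+û(k)+Aᵀp̂(k)−p̂(k)); and Σ_{τ=0}^{t}( 1ᵀû(τ) + Σ_{j=1}^{n} |(Γ(τ)ᵀ1)_j|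 r_j(τ) ) ≤ F(t). -/

import Mathlib

/-!
Each robust constraint is affine in the disturbance, so it holds on the whole box
`|d k j| ≤ r k j` iff it holds at the worst case. Over a box, `∑ j, c j * d j` is at most
`∑ j, |c j| * r j`, with equality at `d = sign c * r` (and the minimum at its negative); this
extremal disturbance is admissible because `r ≥ 0`, and it may be chosen separately for every
constraint, node and period. The wealth and the budget are affine in `d` with gains
`I + Γ + (Aᵀ - I) Θ` and the column sums of `Γ`.
-/

open Finset Matrix

lemma abs_sign_mul_le {x r : ℝ} (hr : 0 ≤ r) : |(SignType.sign x : ℝ) * r| ≤ r := by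
  rw [abs_mul, abs_of_nonneg hr]
  exact mul_le_of_le_one_left hr (by rcases SignType.sign x with _ | _ | _ <;> simp)

section Disturbance

variable {κ ι : Type*}

def disturbanceSet (S : Set κ) (r : κ → ι → ℝ) : Set (κ → ι → ℝ) :=
  {d | ∀ k ∈ S, ∀ j, |d k j| ≤ r k j}

variable {S : Set κ} {r : κ → ι → ℝ}

lemma sign_mul_mem_disturbanceSet (hr : ∀ k ∈ S, ∀ j, 0 ≤ r k j) (c : κ → ι → ℝ) :
    (fun k j => (SignType.sign (c k j) : ℝ) * r k j) ∈ disturbanceSet S r :=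
  fun k hk j => abs_sign_mul_le (hr k hk j)

lemma neg_mem_disturbanceSet {d : κ → ι → ℝ} (hd : d ∈ disturbanceSet S r) :
    -d ∈ disturbanceSet S r := fun k hk j => by simpa using hd k hk j

variable [Fintype ι]

lemma abs_sum_mul_le {c d r : ι → ℝ} (h : ∀ j, |d j| ≤ r j) :
    |∑ j, c j * d j| ≤ ∑ j, |c j| * r j :=
  calc |∑ j, c j * d j| ≤ ∑ j, |c j| * |d j| := by
        simpa only [abs_mul] using abs_sum_le_sum_abs (fun j => c j * d j) univ
    _ ≤ ∑ j, |c j| * r j := by gcongr with j; exact h j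

lemma sum_mul_sign_mul (c r : ι → ℝ) :
    ∑ j, c j * ((SignType.sign (c j) : ℝ) * r j) = ∑ j, |c j| * r j := by
  simp only [← mul_assoc, self_mul_sign]

variable {s : Finset κ} {w : κ → ℝ}

theorem forall_mem_disturbanceSet_sum_le_iff (hs : ↑s ⊆ S) (hr : ∀ k ∈ S, ∀ j, 0 ≤ r k j)
    (hw : ∀ k ∈ s, 0 ≤ w k) (a : κ → ℝ) (c : κ → ι → ℝ) (b : ℝ) :
    (∀ d ∈ disturbanceSet S r, ∑ k ∈ s, w k * (a k + ∑ j, c k j * d k j) ≤ b) ↔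
      ∑ k ∈ s, w k * (a k + ∑ j, |c k j| * r k j) ≤ b := by
  refine ⟨fun h => ?_, fun h d hd => le_trans (sum_le_sum fun k hk => ?_) h⟩
  · simpa only [sum_mul_sign_mul] using h _ (sign_mul_mem_disturbanceSet hr c)
  · have := (le_abs_self _).trans (abs_sum_mul_le (c := c k) (hd k (hs hk)))
    exact mul_le_mul_of_nonneg_left (by linarith) (hw k hk)

theorem forall_mem_disturbanceSet_le_sum_iff (hs : ↑s ⊆ S) (hr : ∀ k ∈ S, ∀ j, 0 ≤ r k j)
    (hw : ∀ k ∈ s, 0 ≤ w k) (a : κ → ℝ) (c : κ → ι → ℝ) (b : ℝ) :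
    (∀ d ∈ disturbanceSet S r, b ≤ ∑ k ∈ s, w k * (a k + ∑ j, c k j * d k j)) ↔
      b ≤ ∑ k ∈ s, w k * (a k - ∑ j, |c k j| * r k j) := by
  refine ⟨fun h => ?_, fun h d hd => h.trans (sum_le_sum fun k hk => ?_)⟩
  · simpa only [Pi.neg_apply, mul_neg, sum_neg_distrib, sum_mul_sign_mul, ← sub_eq_add_neg]
      using h _ (neg_mem_disturbanceSet (sign_mul_mem_disturbanceSet hr c))
  · have := (neg_abs_le _).trans' (neg_le_neg (abs_sum_mul_le (c := c k) (hd k (hs hk))))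
    exact mul_le_mul_of_nonneg_left (by linarith) (hw k hk)

theorem forall_mem_disturbanceSet_le_add_sum_iff {t : κ} (ht : t ∈ S)
    (hr : ∀ k ∈ S, ∀ j, 0 ≤ r k j) (a : ℝ) (c : ι → ℝ) (b : ℝ) :
    (∀ d ∈ disturbanceSet S r, b ≤ a + ∑ j, c j * d t j) ↔ b ≤ a - ∑ j, |c j| * r t j := by
  simpa only [sum_singleton, one_mul] using forall_mem_disturbanceSet_le_sum_iff
    (s := {t}) (w := fun _ => 1) (by simpa using ht) hr (by simp) (fun _ => a) (fun _ => c) b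

lemma sum_add_mulVec_apply (u : ι → ℝ) (M : Matrix ι ι ℝ) (v : ι → ℝ) :
    ∑ i, (u + M *ᵥ v) i = ∑ i, u i + ∑ j, (∑ i, M i j) * v j := by
  simp only [Pi.add_apply, sum_add_distrib, mulVec, dotProduct, sum_mul]
  rw [sum_comm]

theorem forall_mem_disturbanceSet_budget_le_iff (hs : ↑s ⊆ S) (hr : ∀ k ∈ S, ∀ j, 0 ≤ r k j)
    (u : κ → ι → ℝ) (Γ : κ → Matrix ι ι ℝ) (b : ℝ) :
    (∀ d ∈ disturbanceSet S r, ∑ k ∈ s, ∑ i, (u k + Γ k *ᵥ d k) i ≤ b) ↔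
      ∑ k ∈ s, (∑ i, u k i + ∑ j, |∑ i, Γ k i j| * r k j) ≤ b := by
  have h := forall_mem_disturbanceSet_sum_le_iff (w := fun _ => 1) hs hr
    (fun _ _ => zero_le_one) (fun k => ∑ i, u k i) (fun k j => ∑ i, Γ k i j) b
  simp only [one_mul] at h
  simp only [sum_add_mulVec_apply]
  exact h

variable [DecidableEq ι]

lemma wealth_increment_eq (A Γ Θ : Matrix ι ι ℝ) (e u p d : ι → ℝ) :
    e + d + (u + Γ *ᵥ d) + Aᵀ *ᵥ (p + Θ *ᵥ d) - (p + Θ *ᵥ d)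
      = (e + u + Aᵀ *ᵥ p - p) + (1 + Γ + (Aᵀ - 1) * Θ) *ᵥ d := by
  simp only [add_mulVec, mulVec_add, sub_mulVec, one_mulVec, ← mulVec_mulVec]
  abel

theorem forall_mem_disturbanceSet_wealth_nonneg_iff (hs : ↑s ⊆ S) (hr : ∀ k ∈ S, ∀ j, 0 ≤ r k j)
    (A : Matrix ι ι ℝ) (e u p : κ → ι → ℝ) (Γ Θ : κ → Matrix ι ι ℝ) (i : ι) :
    (∀ d ∈ disturbanceSet S r, 0 ≤ ∑ k ∈ s,
        (e k + d k + (u k + Γ k *ᵥ d k) + Aᵀ *ᵥ (p k + Θ k *ᵥ d k) - (p k + Θ k *ᵥ d k)) i) ↔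
      0 ≤ ∑ k ∈ s, (e k + u k + Aᵀ *ᵥ p k - p k) i
        - ∑ k ∈ s, ∑ j, |(1 + Γ k + (Aᵀ - 1) * Θ k) i j| * r k j := by
  have h := forall_mem_disturbanceSet_le_sum_iff (w := fun _ => 1) hs hr
    (fun _ _ => zero_le_one) (fun k => (e k + u k + Aᵀ *ᵥ p k - p k) i)
    (fun k => (1 + Γ k + (Aᵀ - 1) * Θ k) i) 0
  simp only [one_mul] at h
  simp only [wealth_increment_eq, ← sum_sub_distrib]
  exact h

end Disturbance

theorem stmt18_robust_constraints_equiv_general (n T : ℕ) (α : ℝ) (hα : 1 ≤ α) (pbar : Fin n → ℝ)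
    (A : Matrix (Fin n) (Fin n) ℝ) (ehat : ℕ → Fin n → ℝ) (F : ℕ → ℝ)
    (r : ℕ → Fin n → ℝ) (hr : ∀ t, t < T → ∀ j, 0 ≤ r t j)
    (phat uhat : ℕ → Fin n → ℝ) (Θ Γ : ℕ → Matrix (Fin n) (Fin n) ℝ) :
    (∀ d : ℕ → Fin n → ℝ, (∀ k, k < T → ∀ j, |d k j| ≤ r k j) →
      ∀ t, t < T →
        (∀ i, 0 ≤ phat t i + ∑ j, Θ t i j * d t j) ∧
        (∀ i, 0 ≤ uhat t i + ∑ j, Γ t i j * d t j) ∧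
        (∀ i, ∑ k ∈ range (t + 1),
            α ^ (t - k) * (phat k i + ∑ j, Θ k i j * d k j) ≤ α ^ t * pbar i) ∧
        (∀ i, 0 ≤ ∑ k ∈ range (t + 1),
            (ehat k i + d k i + (uhat k i + ∑ j, Γ k i j * d k j)
              + (∑ j, A j i * (phat k j + ∑ l, Θ k j l * d k l))
              - (phat k i + ∑ j, Θ k i j * d k j))) ∧
        (∑ τ ∈ range (t + 1), ∑ i, (uhat τ i + ∑ j, Γ τ i j * d τ j) ≤ F t))
    ↔
    (∀ t, t < T →
      (∀ i, 0 ≤ phat t i - ∑ j, |Θ t i j| * r t j) ∧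
      (∀ i, 0 ≤ uhat t i - ∑ j, |Γ t i j| * r t j) ∧
      (∀ i, ∑ k ∈ range (t + 1),
          α ^ (t - k) * (phat k i + ∑ j, |Θ k i j| * r k j) ≤ α ^ t * pbar i) ∧
      (∀ i, 0 ≤ (∑ k ∈ range (t + 1),
            (ehat k i + uhat k i + (∑ j, A j i * phat k j) - phat k i))
          - ∑ k ∈ range (t + 1), ∑ j,
              |(1 + Γ k + (A.transpose - 1) * Θ k) i j| * r k j) ∧
      (∑ τ ∈ range (t + 1), ((∑ i, uhat τ i) + ∑ j, |∑ i, Γ τ i j| * r τ j) ≤ F t)) := by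
  have hpast : ∀ t < T, ↑(range (t + 1)) ⊆ {k | k < T} := fun t ht k hk =>
    (mem_range.1 hk).trans_le ht
  have payment_nonneg t (ht : t < T) i :=
    forall_mem_disturbanceSet_le_add_sum_iff (S := {k | k < T}) ht hr (phat t i) (Θ t i) 0
  have injection_nonneg t (ht : t < T) i :=
    forall_mem_disturbanceSet_le_add_sum_iff (S := {k | k < T}) ht hr (uhat t i) (Γ t i) 0
  have payment_le t (ht : t < T) i :=
    forall_mem_disturbanceSet_sum_le_iff (hpast t ht) hr
      (fun k _ => pow_nonneg (zero_le_one.trans hα) (t - k)) (phat · i) (Θ · i) (α ^ t * pbar i)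
  -- the `*ᵥ` expressions of the next two lemmas unfold definitionally to the sums of the statement
  have wealth_nonneg t (ht : t < T) i :=
    forall_mem_disturbanceSet_wealth_nonneg_iff (hpast t ht) hr A ehat uhat phat Γ Θ i
  have budget_le t (ht : t < T) :=
    forall_mem_disturbanceSet_budget_le_iff (hpast t ht) hr uhat Γ (F t)
  constructor
  · intro h t ht
    exact ⟨fun i => (payment_nonneg t ht i).1 fun d hd => (h d hd t ht).1 i,
      fun i => (injection_nonneg t ht i).1 fun d hd => (h d hd t ht).2.1 i,
      fun i => (payment_le t ht i).1 fun d hd => (h d hd t ht).2.2.1 i,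
      fun i => (wealth_nonneg t ht i).1 fun d hd => (h d hd t ht).2.2.2.1 i,
      (budget_le t ht).1 fun d hd => (h d hd t ht).2.2.2.2⟩
  · intro h d hd t ht
    obtain ⟨h₁, h₂, h₃, h₄, h₅⟩ := h t ht
    exact ⟨fun i => (payment_nonneg t ht i).2 (h₁ i) d hd,
      fun i => (injection_nonneg t ht i).2 (h₂ i) d hd,
      fun i => (payment_le t ht i).2 (h₃ i) d hd,
      fun i => (wealth_nonneg t ht i).2 (h₄ i) d hd,
      (budget_le t ht).2 h₅ d hd⟩

theorem stmt18_robust_constraints_equiv (n T : ℕ) (hn : 1 ≤ n) (hT : 1 ≤ T)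
    (α : ℝ) (hα : 1 ≤ α)
    (pbar : Fin n → ℝ) (hpbar : ∀ i, 0 ≤ pbar i)
    (A : Matrix (Fin n) (Fin n) ℝ) (hA : ∀ i j, 0 ≤ A i j)
    (ehat : ℕ → Fin n → ℝ) (he : ∀ t, t < T → ∀ i, 0 ≤ ehat t i)
    (F : ℕ → ℝ) (hF : ∀ t, 0 ≤ F t) (hFmono : ∀ s t, s ≤ t → F s ≤ F t)
    (r : ℕ → Fin n → ℝ) (hr : ∀ t, t < T → ∀ j, 0 ≤ r t j)
    (phat uhat : ℕ → Fin n → ℝ) (Θ Γ : ℕ → Matrix (Fin n) (Fin n) ℝ) :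
    (∀ d : ℕ → Fin n → ℝ, (∀ k, k < T → ∀ j, |d k j| ≤ r k j) →
      ∀ t, t < T →
        (∀ i, 0 ≤ phat t i + ∑ j, Θ t i j * d t j) ∧
        (∀ i, 0 ≤ uhat t i + ∑ j, Γ t i j * d t j) ∧
        (∀ i, ∑ k ∈ range (t + 1),
            α ^ (t - k) * (phat k i + ∑ j, Θ k i j * d k j) ≤ α ^ t * pbar i) ∧
        (∀ i, 0 ≤ ∑ k ∈ range (t + 1),
            (ehat k i + d k i + (uhat k i + ∑ j, Γ k i j * d k j)
              + (∑ j, A j i * (phat k j + ∑ l, Θ k j l * d k l))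
              - (phat k i + ∑ j, Θ k i j * d k j))) ∧
        (∑ τ ∈ range (t + 1), ∑ i, (uhat τ i + ∑ j, Γ τ i j * d τ j) ≤ F t))
    ↔
    (∀ t, t < T →
      (∀ i, 0 ≤ phat t i - ∑ j, |Θ t i j| * r t j) ∧
      (∀ i, 0 ≤ uhat t i - ∑ j, |Γ t i j| * r t j) ∧
      (∀ i, ∑ k ∈ range (t + 1),
          α ^ (t - k) * (phat k i + ∑ j, |Θ k i j| * r k j) ≤ α ^ t * pbar i) ∧
      (∀ i, 0 ≤ (∑ k ∈ range (t + 1),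
            (ehat k i + uhat k i + (∑ j, A j i * phat k j) - phat k i))
          - ∑ k ∈ range (t + 1), ∑ j,
              |(1 + Γ k + (A.transpose - 1) * Θ k) i j| * r k j) ∧
      (∑ τ ∈ range (t + 1), ((∑ i, uhat τ i) + ∑ j, |∑ i, Γ τ i j| * r τ j) ≤ F t)) :=
  stmt18_robust_constraints_equiv_general n T α hα pbar A ehat F r hr phat uhat Θ Γ
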